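/- Let n ≥ 2 and write det(xI − N) = x^{n+1} + b_1 x^n + … + b_n x + b_{n+1}. Then (−1)^n b_n = (343n + 441)/150 · [ ((2+√3)/7)^{n+1} + ((2−√3)/7)^{n+1} ] − (21/50) · [ ((2+√3)/7)^n + ((2−√3)/7)^n ] − (14√3/225) · [ ((2+√3)/7)^n − ((2−√3)/7)^n ]; equivalently, the sum of all n×n principal minors of N equals this quantity. -/

import Mathlib

/-- The tridiagonal matrix `N` (of size `(n+1) × (n+1)`). -/
noncomputable def Nmat (n : ℕ) : Matrix (Fin (n+1)) (Fin (n+1)) ℝ :=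
  Matrix.of fun i j =>
    if i = j then (if i.val = 0 ∨ i.val = n then 3/5 else 4/7)
    else if i.val + 1 = j.val ∨ j.val + 1 = i.val then
      (if min i.val j.val = 0 ∨ max i.val j.val = n then -(1/Real.sqrt 35) else -(1/7))
    else 0

/-!
Since `N` is tridiagonal, expansion along the last row shows that the characteristic polynomials
`χₖ` of its leading principal `k × k` blocks satisfy `χₖ₊₂ = (X - 4/7) χₖ₊₁ - χₖ / 49` for
`k ≥ 1`, while `χ_N = (X - 3/5) χₙ - χₙ₋₁ / 35`. Up to sign, the constant and linear coefficients
of `χₖ` are the determinant `dₖ` of the block and the sum `mₖ` of its principal minors of size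
`k - 1`. So `dₖ` solves the linear recurrence with characteristic roots `(2 ± √3)/7`, and `mₖ`
the same recurrence forced by `dₖ₊₁`; the forcing resonates with the roots and produces the
terms `k ((2 ± √3)/7)^k`. Both are solved from their first two values, and
`(-1)ⁿ bₙ = dₙ + 3/5 mₙ - mₙ₋₁ / 35`.
-/

open Polynomial Matrix Real

section Tridiagonal

variable {R : Type*} [CommRing R]

def tridiagonal (a b c : ℕ → R) (k : ℕ) : Matrix (Fin k) (Fin k) R :=
  of fun i j =>
    if (i : ℕ) = j then a i else if (i : ℕ) + 1 = j then b i else if (j : ℕ) + 1 = i then c j else 0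

theorem tridiagonal_congr {a b c a' b' c' : ℕ → R} {k : ℕ} (ha : ∀ i < k, a i = a' i)
    (hb : ∀ i, i + 1 < k → b i = b' i) (hc : ∀ i, i + 1 < k → c i = c' i) :
    tridiagonal a b c k = tridiagonal a' b' c' k := by
  ext i j
  simp only [tridiagonal, of_apply]
  split_ifs <;> grind

variable (a b c : ℕ → R)

theorem tridiagonal_apply_eq_zero {k : ℕ} {i j : Fin k} (h : (i : ℕ) + 1 < j ∨ (j : ℕ) + 1 < i) :
    tridiagonal a b c k i j = 0 := by
  simp only [tridiagonal, of_apply]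
  split_ifs <;> first | rfl | omega

theorem tridiagonal_submatrix_castSucc (k : ℕ) :
    (tridiagonal a b c (k + 1)).submatrix Fin.castSucc Fin.castSucc = tridiagonal a b c k := by
  ext i j
  simp [tridiagonal]

theorem det_tridiagonal_submatrix_succAbove (k : ℕ) :
    ((tridiagonal a b c (k + 2)).submatrix Fin.castSucc (Fin.last k).castSucc.succAbove).det =
      b k * (tridiagonal a b c k).det := by
  rw [det_succ_column _ (Fin.last k), Fin.sum_univ_castSucc, Finset.sum_eq_zero]
  · have hminor : (tridiagonal a b c (k + 2)).submatrix (Fin.castSucc ∘ Fin.castSucc)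
        ((Fin.last k).castSucc.succAbove ∘ Fin.castSucc) = tridiagonal a b c k := by
      ext i j
      simp [tridiagonal, Fin.succAbove_of_castSucc_lt]
    simp only [Fin.succAbove_last, submatrix_submatrix, hminor, submatrix_apply,
      Fin.succAbove_castSucc_self]
    simp [tridiagonal]
  · intro i _
    rw [submatrix_apply, tridiagonal_apply_eq_zero, mul_zero, zero_mul]
    simp

theorem det_tridiagonal_succ_succ (k : ℕ) :
    (tridiagonal a b c (k + 2)).det =
      a (k + 1) * (tridiagonal a b c (k + 1)).det - b k * c k * (tridiagonal a b c k).det := by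
  rw [det_succ_row _ (Fin.last _), Fin.sum_univ_castSucc, Finset.sum_eq_single (Fin.last k)]
  · have hc : tridiagonal a b c (k + 2) (Fin.last (k + 1)) (Fin.last k).castSucc = c k := by
      simp [tridiagonal, show k + 1 + 1 ≠ k by omega]
    have ha : tridiagonal a b c (k + 2) (Fin.last (k + 1)) (Fin.last (k + 1)) = a (k + 1) := by
      simp [tridiagonal]
    simp only [Fin.succAbove_last, tridiagonal_submatrix_castSucc,
      det_tridiagonal_submatrix_succAbove, hc, ha, Fin.val_last, Fin.val_castSucc]
    rw [Odd.neg_one_pow ⟨k, by ring⟩, Even.neg_one_pow ⟨k + 1, rfl⟩]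
    ring
  · intro j _ hj
    rw [tridiagonal_apply_eq_zero, mul_zero, zero_mul]
    simp [Fin.val_lt_last hj]
  · simp

theorem charmatrix_tridiagonal (k : ℕ) :
    charmatrix (tridiagonal a b c k) =
      tridiagonal (fun i => X - C (a i)) (fun i => -C (b i)) (fun i => -C (c i)) k := by
  ext i j
  by_cases hij : i = j
  · subst hij
    simp [charmatrix_apply_eq, tridiagonal]
  · have hij' : (i : ℕ) ≠ j := Fin.val_ne_of_ne hij
    simp only [charmatrix_apply_ne _ _ _ hij, tridiagonal, of_apply, if_neg hij']
    split_ifs <;> simp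

theorem charpoly_tridiagonal_zero : (tridiagonal a b c 0).charpoly = 1 :=
  charpoly_isEmpty

theorem charpoly_tridiagonal_one : (tridiagonal a b c 1).charpoly = X - C (a 0) := by
  simp [charpoly, tridiagonal]

theorem charpoly_tridiagonal_succ_succ (k : ℕ) :
    (tridiagonal a b c (k + 2)).charpoly =
      (X - C (a (k + 1))) * (tridiagonal a b c (k + 1)).charpoly -
        C (b k * c k) * (tridiagonal a b c k).charpoly := by
  simp only [charpoly, charmatrix_tridiagonal, det_tridiagonal_succ_succ, C_mul]
  ring

end Tridiagonal

section ThreeTermCoeff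

variable {R : Type*} [CommRing R]

theorem coeff_zero_X_sub_C_mul_sub_C_mul (a t : R) (p q : R[X]) :
    ((X - C a) * p - C t * q).coeff 0 = -(a * p.coeff 0) - t * q.coeff 0 := by
  simp [mul_coeff_zero]

theorem coeff_one_X_sub_C_mul_sub_C_mul (a t : R) (p q : R[X]) :
    ((X - C a) * p - C t * q).coeff 1 = p.coeff 0 - a * p.coeff 1 - t * q.coeff 1 := by
  simp [sub_mul, coeff_X_mul, coeff_C_mul]

end ThreeTermCoeff

theorem eq_of_two_step_recurrence {α : Type*} {u w : ℕ → α} (step : ℕ → α → α → α)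
    (hu : ∀ k, u (k + 2) = step k (u k) (u (k + 1)))
    (hw : ∀ k, w (k + 2) = step k (w k) (w (k + 1))) (h0 : u 0 = w 0) (h1 : u 1 = w 1) :
    u = w := by
  funext k
  induction k using Nat.twoStepInduction with
  | zero => exact h0
  | one => exact h1
  | more k ih₀ ih₁ => rw [hu, hw, ih₀, ih₁]

noncomputable def Ndiag (i : ℕ) : ℝ := if i = 0 then 3/5 else 4/7

noncomputable def Noffdiag (i : ℕ) : ℝ := if i = 0 then -(1 / √35) else -(1/7)

/-- The leading principal `k × k` block of `Nmat n`, for every `n ≥ k`. -/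
noncomputable def Nblock (k : ℕ) : Matrix (Fin k) (Fin k) ℝ :=
  tridiagonal Ndiag Noffdiag Noffdiag k

theorem Nmat_succ_eq_tridiagonal (m : ℕ) :
    Nmat (m + 1) = tridiagonal (Function.update Ndiag (m + 1) (Ndiag 0))
      (Function.update Noffdiag m (Noffdiag 0)) (Function.update Noffdiag m (Noffdiag 0)) (m + 2) := by
  ext i j
  simp only [Nmat, tridiagonal, of_apply, Ndiag, Noffdiag, Function.update_apply]
  split_ifs <;> grind

theorem Noffdiag_zero_mul_self : Noffdiag 0 * Noffdiag 0 = 1 / 35 := by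
  rw [Noffdiag, if_pos rfl, neg_mul_neg, div_mul_div_comm, one_mul, mul_self_sqrt (by norm_num)]

theorem charpoly_Nmat_succ (m : ℕ) :
    (Nmat (m + 1)).charpoly =
      (X - C (3/5)) * (Nblock (m + 1)).charpoly - C (1/35) * (Nblock m).charpoly := by
  have hblock : ∀ k ≤ m + 1, tridiagonal (Function.update Ndiag (m + 1) (Ndiag 0))
      (Function.update Noffdiag m (Noffdiag 0)) (Function.update Noffdiag m (Noffdiag 0)) k =
      Nblock k := fun k hk =>
    tridiagonal_congr (fun i hi => Function.update_of_ne (by omega) _ _)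
      (fun i hi => Function.update_of_ne (by omega) _ _)
      (fun i hi => Function.update_of_ne (by omega) _ _)
  rw [Nmat_succ_eq_tridiagonal, charpoly_tridiagonal_succ_succ, hblock _ le_rfl,
    hblock _ (Nat.le_succ m), Function.update_self, Function.update_self, Noffdiag_zero_mul_self]
  norm_num [Ndiag]

theorem charpoly_Nblock_add_three (k : ℕ) :
    (Nblock (k + 3)).charpoly =
      (X - C (4/7)) * (Nblock (k + 2)).charpoly - C (1/49) * (Nblock (k + 1)).charpoly := by
  rw [Nblock, charpoly_tridiagonal_succ_succ]
  norm_num [Ndiag, Noffdiag, Nblock]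

theorem sqrt_three_sq : √3 ^ 2 = 3 := sq_sqrt (by norm_num)

local notation "α" => ((2 + √3) / 7 : ℝ)
local notation "β" => ((2 - √3) / 7 : ℝ)

/- The general solutions of the recurrences below, with roots `α` and `β` of
`x ^ 2 = 4/7 x - 1/49`, fitted to the values at `k = 0, 1`. -/

noncomputable def detFormula (k : ℕ) : ℝ := (3/10 + √3/6) * α ^ k + (3/10 - √3/6) * β ^ k

noncomputable def minorSumFormula (k : ℕ) : ℝ :=
  (1/2 + 53 * √3/180 + (7/12 + 7 * √3/20) * k) * α ^ k +
    (1/2 - 53 * √3/180 + (7/12 - 7 * √3/20) * k) * β ^ k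

theorem detFormula_add_two (k : ℕ) :
    detFormula (k + 2) = 4/7 * detFormula (k + 1) - 1/49 * detFormula k := by
  have := sqrt_three_sq
  simp only [detFormula]
  grind

theorem minorSumFormula_add_two (k : ℕ) :
    minorSumFormula (k + 2) =
      4/7 * minorSumFormula (k + 1) - 1/49 * minorSumFormula k + detFormula (k + 1) := by
  have := sqrt_three_sq
  simp only [minorSumFormula, detFormula]
  push_cast
  grind

theorem coeff_zero_charpoly_Nblock (k : ℕ) :
    (-1) ^ (k + 1) * (Nblock (k + 1)).charpoly.coeff 0 = detFormula k := by
  refine congrFun (eq_of_two_step_recurrence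
    (u := fun k => (-1) ^ (k + 1) * (Nblock (k + 1)).charpoly.coeff 0)
    (fun _ x y => 4/7 * y - 1/49 * x) (fun k => ?_) detFormula_add_two ?_ ?_) k
  · rw [charpoly_Nblock_add_three, coeff_zero_X_sub_C_mul_sub_C_mul]
    ring
  · change (-1) ^ 1 * (tridiagonal Ndiag Noffdiag Noffdiag 1).charpoly.coeff 0 = detFormula 0
    norm_num [charpoly_tridiagonal_one, Ndiag, detFormula]
  · rw [Nblock, charpoly_tridiagonal_succ_succ, charpoly_tridiagonal_one, charpoly_tridiagonal_zero,
      coeff_zero_X_sub_C_mul_sub_C_mul, Noffdiag_zero_mul_self]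
    have := sqrt_three_sq
    norm_num [Ndiag, detFormula]
    grind

theorem coeff_one_charpoly_Nblock (k : ℕ) :
    (-1) ^ k * (Nblock (k + 1)).charpoly.coeff 1 = minorSumFormula k := by
  refine congrFun (eq_of_two_step_recurrence
    (u := fun k => (-1) ^ k * (Nblock (k + 1)).charpoly.coeff 1)
    (fun k x y => 4/7 * y - 1/49 * x + detFormula (k + 1)) (fun k => ?_)
    minorSumFormula_add_two ?_ ?_) k
  · rw [charpoly_Nblock_add_three, coeff_one_X_sub_C_mul_sub_C_mul,
      ← coeff_zero_charpoly_Nblock (k + 1)]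
    ring
  · change (-1) ^ 0 * (tridiagonal Ndiag Noffdiag Noffdiag 1).charpoly.coeff 1 = minorSumFormula 0
    norm_num [charpoly_tridiagonal_one, minorSumFormula]
  · rw [Nblock, charpoly_tridiagonal_succ_succ, charpoly_tridiagonal_one, charpoly_tridiagonal_zero,
      coeff_one_X_sub_C_mul_sub_C_mul, Noffdiag_zero_mul_self]
    have := sqrt_three_sq
    norm_num [Ndiag, minorSumFormula, coeff_one]
    grind

/-- Writing `det(xI − N) = x^{n+1} + b_1 x^n + ⋯ + b_n x + b_{n+1}`, the coefficient
of `x` satisfies `(−1)^n b_n = (343n+441)/150·[((2+√3)/7)^{n+1} + ((2−√3)/7)^{n+1}]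
− (21/50)·[((2+√3)/7)^n + ((2−√3)/7)^n] − (14√3/225)·[((2+√3)/7)^n − ((2−√3)/7)^n]`. -/
theorem neg_one_pow_mul_charpoly_coeff_one_Nmat (n : ℕ) (hn : 2 ≤ n) :
    (-1 : ℝ)^n * (Nmat n).charpoly.coeff 1
      = (343 * (n : ℝ) + 441) / 150
          * (((2 + Real.sqrt 3) / 7)^(n+1) + ((2 - Real.sqrt 3) / 7)^(n+1))
        - 21/50 * (((2 + Real.sqrt 3) / 7)^n + ((2 - Real.sqrt 3) / 7)^n)
        - 14 * Real.sqrt 3 / 225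
          * (((2 + Real.sqrt 3) / 7)^n - ((2 - Real.sqrt 3) / 7)^n) := by
  obtain ⟨m, rfl⟩ : ∃ m, n = m + 2 := ⟨n - 2, by omega⟩
  rw [charpoly_Nmat_succ (m + 1), coeff_one_X_sub_C_mul_sub_C_mul]
  calc _ = detFormula (m + 1) + 3/5 * minorSumFormula (m + 1) - 1/35 * minorSumFormula m := by
        rw [← coeff_zero_charpoly_Nblock, ← coeff_one_charpoly_Nblock, ← coeff_one_charpoly_Nblock]
        ring
    _ = _ := by
        have := sqrt_three_sq
        simp only [detFormula, minorSumFormula]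
        push_cast
        grind
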